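/- Let g = A_{5,2} be the 5-dimensional metric Lie algebra with orthonormal basis v1,…,v5 and nonzero brackets [v1,v2] = α v3 + β v4, [v1,v3] = γ v4, [v1,v4] = δ v5, with α, γ, δ > 0 and β ∈ ℝ. Then ξ = Σ ξ_i v_i is affine if and only if ξ1 = ξ2 = ξ3 = ξ4 = 0, i.e. ξ ∈ Z(g) = span{v5}. -/

import Mathlib

local notation "⟪" x ", " y "⟫" => @inner ℝ _ _ x y

/-- The underlying space `ℝ⁵`. -/
abbrev V := EuclideanSpace ℝ (Fin 5)

/-- The standard orthonormal basis; `e 0,…,e 4` play the roles of `v1,…,v5`. -/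
noncomputable def e (i : Fin 5) : V := EuclideanSpace.single i 1

/-! The Levi-Civita product is bilinear, and the Koszul formula computes it on basis vectors.
Testing `L_ξ∇ = 0` on `(v₄, v₅)` leaves `(δ/2) [ξ, v₁] = 0`, which forces `ξ₂ = ξ₃ = ξ₄ = 0`;
testing it on `(v₃, v₃)` leaves `-γ² ξ₁ v₁ = 0`. Conversely, a central `ξ` has `ad ξ = 0`, and
then every term of `L_ξ∇` vanishes. -/

section Koszul

variable {E : Type*} [NormedAddCommGroup E] [InnerProductSpace ℝ E]

def IsKoszul (b : E →ₗ[ℝ] E →ₗ[ℝ] E) (nab : E → E → E) : Prop :=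
  ∀ x y z, 2 * ⟪nab x y, z⟫ = ⟪b x y, z⟫ - ⟪b y z, x⟫ + ⟪b z x, y⟫

def IsAffine (b : E →ₗ[ℝ] E →ₗ[ℝ] E) (nab : E → E → E) (ξ : E) : Prop :=
  ∀ v w, b ξ (nab v w) - nab (b ξ v) w - nab v (b ξ w) = 0

namespace IsKoszul

variable {b : E →ₗ[ℝ] E →ₗ[ℝ] E} {nab : E → E → E}

theorem eq_of_inner (hk : IsKoszul b nab) {x y u : E}
    (h : ∀ z, 2 * ⟪u, z⟫ = ⟪b x y, z⟫ - ⟪b y z, x⟫ + ⟪b z x, y⟫) : nab x y = u :=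
  ext_inner_right ℝ fun z => by linarith [hk x y z, h z]

theorem smul_left (hk : IsKoszul b nab) (c : ℝ) (x y : E) : nab (c • x) y = c • nab x y :=
  hk.eq_of_inner fun z => by
    simp only [real_inner_smul_left, map_smul, LinearMap.smul_apply, real_inner_smul_right]
    linear_combination c * hk x y z

theorem smul_right (hk : IsKoszul b nab) (c : ℝ) (x y : E) : nab x (c • y) = c • nab x y :=
  hk.eq_of_inner fun z => by
    simp only [real_inner_smul_left, map_smul, LinearMap.smul_apply, real_inner_smul_right]
    linear_combination c * hk x y z

theorem zero_left (hk : IsKoszul b nab) (y : E) : nab 0 y = 0 := by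
  simpa using hk.smul_left 0 0 y

theorem zero_right (hk : IsKoszul b nab) (x : E) : nab x 0 = 0 := by
  simpa using hk.smul_right 0 x 0

theorem isAffine_of_apply_eq_zero (hk : IsKoszul b nab) {ξ : E} (hξ : ∀ u, b ξ u = 0) :
    IsAffine b nab ξ := fun v w => by
  rw [hξ, hξ, hξ, hk.zero_left, hk.zero_right, sub_zero, sub_zero]

end IsKoszul

end Koszul

theorem inner_e (u : V) (k : Fin 5) : ⟪u, e k⟫ = u k := by
  simp [e, EuclideanSpace.inner_single_right]

theorem inner_e_left (u : V) (k : Fin 5) : ⟪e k, u⟫ = u k := by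
  rw [real_inner_comm, inner_e]

theorem e_apply (i k : Fin 5) : e i k = if i = k then 1 else 0 := by
  simp [e, PiLp.single_apply, eq_comm]

theorem sum_smul_e (z : V) : ∑ j, z j • e j = z := by
  simpa [e, EuclideanSpace.basisFun_apply] using (EuclideanSpace.basisFun (Fin 5) ℝ).sum_repr z

theorem LinearMap.apply_eq_sum_smul_e (b : V →ₗ[ℝ] V →ₗ[ℝ] V) (x z : V) :
    b x z = ∑ j, z j • b x (e j) := by
  conv_lhs => rw [← sum_smul_e z]
  simp only [map_sum, map_smul]

structure IsA52Bracket (α β γ δ : ℝ) (b : V →ₗ[ℝ] V →ₗ[ℝ] V) : Prop where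
  skew : ∀ x y, b x y = - b y x
  e0_e1 : b (e 0) (e 1) = α • e 2 + β • e 3
  e0_e2 : b (e 0) (e 2) = γ • e 3
  e0_e3 : b (e 0) (e 3) = δ • e 4
  e_e_eq_zero : ∀ i j : Fin 5, i < j →
    (i, j) ∉ ({(0, 1), (0, 2), (0, 3)} : Set (Fin 5 × Fin 5)) → b (e i) (e j) = 0

namespace IsA52Bracket

variable {α β γ δ : ℝ} {b : V →ₗ[ℝ] V →ₗ[ℝ] V}

theorem apply_self (hb : IsA52Bracket α β γ δ b) (x : V) : b x x = 0 := by
  have h := hb.skew x x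
  rw [eq_neg_iff_add_eq_zero, ← two_smul ℝ] at h
  exact (smul_eq_zero.mp h).resolve_left two_ne_zero

theorem e_e_swap_eq_zero (hb : IsA52Bracket α β γ δ b) {i j : Fin 5} (hij : i < j)
    (h : (i, j) ∉ ({(0, 1), (0, 2), (0, 3)} : Set (Fin 5 × Fin 5))) : b (e j) (e i) = 0 := by
  rw [hb.skew, hb.e_e_eq_zero i j hij h, neg_zero]

theorem apply_e0 (hb : IsA52Bracket α β γ δ b) (z : V) :
    b (e 0) z = z 1 • (α • e 2 + β • e 3) + z 2 • (γ • e 3) + z 3 • (δ • e 4) := by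
  rw [b.apply_eq_sum_smul_e, Fin.sum_univ_five, hb.apply_self, hb.e0_e1, hb.e0_e2, hb.e0_e3,
    hb.e_e_eq_zero 0 4 (by decide) (by simp)]
  simp only [smul_zero, zero_add, add_zero]

theorem apply_e2 (hb : IsA52Bracket α β γ δ b) (z : V) : b (e 2) z = -(z 0 * γ) • e 3 := by
  rw [b.apply_eq_sum_smul_e, Fin.sum_univ_five, hb.skew _ (e 0), hb.e0_e2, hb.apply_self,
    hb.e_e_swap_eq_zero (i := 1) (by decide) (by simp),
    hb.e_e_eq_zero 2 3 (by decide) (by simp), hb.e_e_eq_zero 2 4 (by decide) (by simp)]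
  simp only [smul_zero, add_zero, smul_neg, smul_smul, neg_smul]

theorem apply_e3 (hb : IsA52Bracket α β γ δ b) (z : V) : b (e 3) z = -(z 0 * δ) • e 4 := by
  rw [b.apply_eq_sum_smul_e, Fin.sum_univ_five, hb.skew _ (e 0), hb.e0_e3, hb.apply_self,
    hb.e_e_swap_eq_zero (i := 1) (by decide) (by simp),
    hb.e_e_swap_eq_zero (i := 2) (by decide) (by simp),
    hb.e_e_eq_zero 3 4 (by decide) (by simp)]
  simp only [smul_zero, add_zero, smul_neg, smul_smul, neg_smul]

theorem apply_e4 (hb : IsA52Bracket α β γ δ b) (z : V) : b (e 4) z = 0 := by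
  rw [b.apply_eq_sum_smul_e, Fin.sum_univ_five, hb.apply_self,
    hb.e_e_swap_eq_zero (i := 0) (by decide) (by simp),
    hb.e_e_swap_eq_zero (i := 1) (by decide) (by simp),
    hb.e_e_swap_eq_zero (i := 2) (by decide) (by simp),
    hb.e_e_swap_eq_zero (i := 3) (by decide) (by simp)]
  simp only [smul_zero, add_zero]

variable {nab : V → V → V}

theorem nab_e3_e4 (hb : IsA52Bracket α β γ δ b) (hk : IsKoszul b nab) :
    nab (e 3) (e 4) = (δ / 2) • e 0 :=
  hk.eq_of_inner fun z => by
    simp only [hb.skew z, hb.apply_e3, hb.apply_e4, inner_neg_left, inner_zero_left,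
      real_inner_smul_left, inner_e, inner_e_left, e_apply, Fin.reduceEq, if_false, if_true]
    ring

theorem nab_e4_e4 (hb : IsA52Bracket α β γ δ b) (hk : IsKoszul b nab) :
    nab (e 4) (e 4) = 0 :=
  hk.eq_of_inner fun z => by
    simp only [hb.skew z, hb.apply_e4, inner_neg_left, inner_zero_left]
    ring

theorem nab_e2_e2 (hb : IsA52Bracket α β γ δ b) (hk : IsKoszul b nab) :
    nab (e 2) (e 2) = 0 :=
  hk.eq_of_inner fun z => by
    simp only [hb.skew z, hb.apply_e2, inner_neg_left, inner_zero_left, real_inner_smul_left,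
      inner_e, e_apply, Fin.reduceEq, if_false]
    ring

theorem nab_e2_e3 (hb : IsA52Bracket α β γ δ b) (hk : IsKoszul b nab) :
    nab (e 2) (e 3) = (γ / 2) • e 0 :=
  hk.eq_of_inner fun z => by
    simp only [hb.skew z, hb.apply_e2, hb.apply_e3, inner_neg_left, real_inner_smul_left,
      inner_e, inner_e_left, e_apply, Fin.reduceEq, if_false, if_true]
    ring

theorem nab_e3_e2 (hb : IsA52Bracket α β γ δ b) (hk : IsKoszul b nab) :
    nab (e 3) (e 2) = (γ / 2) • e 0 :=
  hk.eq_of_inner fun z => by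
    simp only [hb.skew z, hb.apply_e2, hb.apply_e3, inner_neg_left, real_inner_smul_left,
      inner_e, inner_e_left, e_apply, Fin.reduceEq, if_false, if_true]
    ring

theorem apply_e0_eq_zero_of_isAffine (hb : IsA52Bracket α β γ δ b) (hk : IsKoszul b nab)
    (hδ : δ ≠ 0) {ξ : V} (h : IsAffine b nab ξ) : b ξ (e 0) = 0 := by
  have h34 := h (e 3) (e 4)
  rw [hb.skew ξ (e 3), hb.skew ξ (e 4), hb.apply_e3, hb.apply_e4, neg_zero, neg_smul, neg_neg,
    hk.smul_left, hk.zero_right, hb.nab_e4_e4 hk, hb.nab_e3_e4 hk, map_smul] at h34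
  simpa [hδ] using h34

theorem coords_eq_zero_of_apply_e0_eq_zero (hb : IsA52Bracket α β γ δ b) (hα : α ≠ 0)
    (hγ : γ ≠ 0) (hδ : δ ≠ 0) {ξ : V} (h : b ξ (e 0) = 0) : ξ 1 = 0 ∧ ξ 2 = 0 ∧ ξ 3 = 0 := by
  rw [hb.skew, hb.apply_e0, neg_eq_zero] at h
  have h2 := congrArg (· 2) h
  have h3 := congrArg (· 3) h
  have h4 := congrArg (· 4) h
  simp only [smul_add, PiLp.add_apply, PiLp.smul_apply, e_apply, ↓reduceIte, smul_eq_mul, mul_one,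
    Fin.reduceEq, mul_zero, add_zero, PiLp.zero_apply, mul_eq_zero, zero_add] at h2 h3 h4
  have h1 : ξ 1 = 0 := h2.resolve_right hα
  refine ⟨h1, ?_, h4.resolve_right hδ⟩
  rw [h1, zero_mul, zero_add] at h3
  exact (mul_eq_zero.mp h3).resolve_right hγ

theorem coord0_eq_zero_of_isAffine (hb : IsA52Bracket α β γ δ b) (hk : IsKoszul b nab)
    (hγ : γ ≠ 0) {ξ : V} (h : IsAffine b nab ξ) : ξ 0 = 0 := by
  have h22 := h (e 2) (e 2)
  rw [hb.nab_e2_e2 hk, map_zero, hb.skew ξ (e 2), hb.apply_e2, neg_smul, neg_neg, hk.smul_left,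
    hk.smul_right, hb.nab_e3_e2 hk, hb.nab_e2_e3 hk] at h22
  have h0 := congrArg (· 0) h22
  simp only [zero_sub, PiLp.sub_apply, PiLp.neg_apply, PiLp.smul_apply, e_apply, ↓reduceIte,
    smul_eq_mul, mul_one, PiLp.zero_apply] at h0
  have : ξ 0 * γ ^ 2 = 0 := by linarith
  simpa [hγ] using this

theorem apply_eq_zero_of_coords_eq_zero (hb : IsA52Bracket α β γ δ b) {ξ : V} (h0 : ξ 0 = 0)
    (h1 : ξ 1 = 0) (h2 : ξ 2 = 0) (h3 : ξ 3 = 0) (u : V) : b ξ u = 0 := by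
  have hξ : ξ = ξ 4 • e 4 := by
    conv_lhs => rw [← sum_smul_e ξ]
    simp only [Fin.sum_univ_five, h0, h1, h2, h3, zero_smul, zero_add]
  rw [hξ, map_smul, LinearMap.smul_apply, hb.apply_e4, smul_zero]

end IsA52Bracket

/-- on `A_{5,2}` (brackets `[v1,v2]=αv3+βv4`, `[v1,v3]=γv4`,
`[v1,v4]=δv5`, `α,γ,δ>0`), `ξ` is affine iff `ξ1=ξ2=ξ3=ξ4=0`,
i.e. `ξ ∈ Z(g) = span{v5}`. -/
theorem stmt_14
    (α β γ δ : ℝ) (hα : 0 < α) (hγ : 0 < γ) (hδ : 0 < δ)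
    (b : V →ₗ[ℝ] V →ₗ[ℝ] V)
    (hskew : ∀ x y, b x y = - b y x)
    (h12 : b (e 0) (e 1) = α • e 2 + β • e 3)
    (h13 : b (e 0) (e 2) = γ • e 3)
    (h14 : b (e 0) (e 3) = δ • e 4)
    (hzero : ∀ i j : Fin 5, i < j →
      (i, j) ∉ ({(0, 1), (0, 2), (0, 3)} : Set (Fin 5 × Fin 5)) → b (e i) (e j) = 0)
    (nab : V → V → V)
    (hkoszul : ∀ x y z, 2 * ⟪nab x y, z⟫ = ⟪b x y, z⟫ - ⟪b y z, x⟫ + ⟪b z x, y⟫)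
    (ξ : V) :
    (∀ v w, b ξ (nab v w) - nab (b ξ v) w - nab v (b ξ w) = 0) ↔
      (ξ 0 = 0 ∧ ξ 1 = 0 ∧ ξ 2 = 0 ∧ ξ 3 = 0) := by
  have hb : IsA52Bracket α β γ δ b := ⟨hskew, h12, h13, h14, hzero⟩
  have hk : IsKoszul b nab := hkoszul
  constructor
  · intro h
    obtain ⟨h1, h2, h3⟩ := hb.coords_eq_zero_of_apply_e0_eq_zero hα.ne' hγ.ne' hδ.ne'
      (hb.apply_e0_eq_zero_of_isAffine hk hδ.ne' h)
    exact ⟨hb.coord0_eq_zero_of_isAffine hk hγ.ne' h, h1, h2, h3⟩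
  · rintro ⟨h0, h1, h2, h3⟩
    exact hk.isAffine_of_apply_eq_zero (hb.apply_eq_zero_of_coords_eq_zero h0 h1 h2 h3)
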